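/- Let μ = (2,3,...,i-1,i,p) with p ≥ i. Then the ideal of Z[x_1,...,x_i] generated by h_2(x_1), h_2(x_1,x_2), ..., h_2(x_1,...,x_{i-1}), h_{p-i+1}(x_1,...,x_i) equals the ideal generated by x_1·h_1(x_1), x_2·h_1(x_1,x_2), ..., x_{i-1}·h_1(x_1,...,x_{i-1}), and x_i^{p-i+1} + x_i^{p-i}·(x_1+...+x_{i-1}). -/
import Mathlib


open MvPolynomial Finset

/-- The set of the first `j` variables among `x_0, ..., x_{n-1}`. -/
def fv (n j : ℕ) : Finset (Fin n) := Finset.univ.filter (fun i => (i : ℕ) < j)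

/-- Complete homogeneous symmetric polynomial of degree `m` in the variables indexed by `S`. -/
noncomputable def hh (R : Type*) [CommRing R] (n m : ℕ) (S : Finset (Fin n)) :
    MvPolynomial (Fin n) R :=
  ∑ s ∈ S.sym m, ((s : Multiset (Fin n)).map (X : Fin n → MvPolynomial (Fin n) R)).prod

/-- Elementary symmetric polynomial of degree `m` in the variables indexed by `S`. -/
noncomputable def ee (R : Type*) [CommRing R] (n m : ℕ) (S : Finset (Fin n)) :
    MvPolynomial (Fin n) R :=
  ∑ s ∈ S.powersetCard m, ∏ i ∈ s, X i

lemma hh_zero (R : Type*) [CommRing R] (n : ℕ) (S : Finset (Fin n)) : hh R n 0 S = 1 := by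
  rw [hh, Finset.sym_zero, Finset.sum_singleton]
  rfl

lemma hh_empty (R : Type*) [CommRing R] (n m : ℕ) : hh R n (m + 1) (∅ : Finset (Fin n)) = 0 := by
  simp [hh, Finset.sym_empty]

lemma hh_insert {R : Type*} [CommRing R] {n : ℕ} (m : ℕ) (j : Fin n) (S : Finset (Fin n))
    (hj : j ∉ S) :
    hh R n (m + 1) (insert j S) = X j * hh R n m (insert j S) + hh R n (m + 1) S := by
  classical
  have key : (insert j S).sym (m + 1) =
      (((insert j S).sym m).image (Sym.cons j)) ∪ S.sym (m + 1) := by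
    ext s
    simp only [Finset.mem_union, Finset.mem_image, Finset.mem_sym_iff, Finset.mem_insert]
    constructor
    · intro h
      by_cases hjs : j ∈ s
      · left
        refine ⟨s.erase j hjs, ?_, Sym.cons_erase hjs⟩
        intro a ha
        have ha' : a ∈ s := by
          have : a ∈ (s : Multiset (Fin n)).erase j := by
            rwa [← Sym.coe_erase hjs]
          exact Multiset.mem_of_mem_erase this
        exact h a ha'
      · right
        intro a ha
        rcases h a ha with rfl | h'
        · exact absurd ha hjs
        · exact h'
    · rintro (⟨t, ht, rfl⟩ | h)
      · intro a ha
        rcases Sym.mem_cons.mp ha with rfl | ha'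
        · exact Or.inl rfl
        · exact ht a ha'
      · exact fun a ha => Or.inr (h a ha)
  have hdisj : Disjoint (((insert j S).sym m).image (Sym.cons j)) (S.sym (m + 1)) := by
    rw [Finset.disjoint_left]
    rintro s hs hs'
    rcases Finset.mem_image.mp hs with ⟨t, _, rfl⟩
    exact hj ((Finset.mem_sym_iff.mp hs') j (Sym.mem_cons_self j t))
  rw [hh, key, Finset.sum_union hdisj]
  have himg : ∑ s ∈ ((insert j S).sym m).image (Sym.cons j),
      ((s : Multiset (Fin n)).map (X : Fin n → MvPolynomial (Fin n) R)).prod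
      = X j * hh R n m (insert j S) := by
    rw [Finset.sum_image (fun s _ t _ h => (Sym.cons_inj_right j s t).mp h), hh,
      Finset.mul_sum]
    apply Finset.sum_congr rfl
    intro s _
    rw [Sym.coe_cons, Multiset.map_cons, Multiset.prod_cons]
  rw [himg]
  rfl

lemma hh_one (R : Type*) [CommRing R] (n : ℕ) (S : Finset (Fin n)) :
    hh R n 1 S = ∑ a ∈ S, X a := by
  classical
  induction S using Finset.induction with
  | empty => simp [hh_empty]
  | @insert j S hj ih =>
    rw [show (1 : ℕ) = 0 + 1 from rfl, hh_insert 0 j S hj, hh_zero, mul_one, ih,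
      Finset.sum_insert hj]

lemma fv_zero (n : ℕ) : fv n 0 = ∅ := by
  ext a; simp [fv]

lemma fv_succ (n k : ℕ) (hk : k < n) : fv n (k + 1) = insert ⟨k, hk⟩ (fv n k) := by
  ext a
  simp only [fv, Finset.mem_filter, Finset.mem_univ, true_and, Finset.mem_insert,
    Fin.ext_iff]
  omega

lemma fv_not_mem (n k : ℕ) (hk : k < n) : (⟨k, hk⟩ : Fin n) ∉ fv n k := by
  simp [fv]

lemma hh_fv_succ (R : Type*) [CommRing R] (n m k : ℕ) (hk : k < n) :
    hh R n (m + 1) (fv n (k + 1)) =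
      X (⟨k, hk⟩ : Fin n) * hh R n m (fv n (k + 1)) + hh R n (m + 1) (fv n k) := by
  rw [fv_succ n k hk]
  exact hh_insert m _ _ (fv_not_mem n k hk)

lemma P1 (i : ℕ) (I : Ideal (MvPolynomial (Fin i) ℤ))
    (hI : ∀ j : Fin i, (j : ℕ) + 1 < i → X j * hh ℤ i 1 (fv i ((j : ℕ) + 1)) ∈ I) :
    ∀ k, k < i → ∀ t, hh ℤ i (t + 2) (fv i k) ∈ I := by
  intro k
  induction k with
  | zero =>
    intro _ t
    rw [fv_zero]
    rw [show t + 2 = (t + 1) + 1 from rfl, hh_empty]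
    exact zero_mem I
  | succ k ih =>
    intro hk t
    have hki : k < i := by omega
    induction t with
    | zero =>
      rw [show (0 : ℕ) + 2 = 1 + 1 from rfl, hh_fv_succ ℤ i 1 k hki]
      exact add_mem (hI ⟨k, hki⟩ hk) (ih hki 0)
    | succ t iht =>
      rw [show t + 1 + 2 = (t + 2) + 1 from rfl, hh_fv_succ ℤ i (t + 2) k hki]
      exact add_mem (Ideal.mul_mem_left I _ iht) (ih hki (t + 1))

lemma P2 (i : ℕ) (hi : 1 ≤ i) (I : Ideal (MvPolynomial (Fin i) ℤ))
    (hI : ∀ j : Fin i, (j : ℕ) + 1 < i → X j * hh ℤ i 1 (fv i ((j : ℕ) + 1)) ∈ I) :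
    ∀ t, hh ℤ i (t + 1) (fv i i) -
      (X (⟨i - 1, by omega⟩ : Fin i) ^ (t + 1) +
        X (⟨i - 1, by omega⟩ : Fin i) ^ t * ∑ a ∈ fv i (i - 1), X a) ∈ I := by
  have hii : i - 1 + 1 = i := by omega
  have hlt : i - 1 < i := by omega
  intro t
  induction t with
  | zero =>
    have h2 := hh_fv_succ ℤ i 0 (i - 1) hlt
    rw [hii] at h2
    simp only [Nat.zero_add] at h2 ⊢
    rw [hh_zero, mul_one] at h2
    rw [h2, hh_one]
    simp only [pow_one, pow_zero, one_mul, sub_self]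
    exact zero_mem I
  | succ t iht =>
    have hrec := hh_fv_succ ℤ i (t + 1) (i - 1) hlt
    rw [hii] at hrec
    have hmem := add_mem (Ideal.mul_mem_left I (X (⟨i - 1, hlt⟩ : Fin i)) iht)
      (P1 i I hI (i - 1) hlt t)
    have heq : hh ℤ i (t + 1 + 1) (fv i i) -
        (X (⟨i - 1, hlt⟩ : Fin i) ^ (t + 1 + 1) +
          X (⟨i - 1, hlt⟩ : Fin i) ^ (t + 1) * ∑ a ∈ fv i (i - 1), X a) =
        X (⟨i - 1, hlt⟩ : Fin i) *
          (hh ℤ i (t + 1) (fv i i) -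
            (X (⟨i - 1, hlt⟩ : Fin i) ^ (t + 1) +
              X (⟨i - 1, hlt⟩ : Fin i) ^ t * ∑ a ∈ fv i (i - 1), X a)) +
          hh ℤ i (t + 1 + 1) (fv i (i - 1)) := by
      rw [hrec]
      ring
    rw [heq]
    exact hmem

/-- for `μ = (2,3,...,i-1,i,p)` with `p ≥ i`, the ideal of `ℤ[x_1,...,x_i]`
generated by `h_2(x_1), ..., h_2(x_1,...,x_{i-1}), h_{p-i+1}(x_1,...,x_i)` equals the ideal
generated by `x_1 h_1(x_1), ..., x_{i-1} h_1(x_1,...,x_{i-1})` and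
`x_i^{p-i+1} + x_i^{p-i}(x_1 + ... + x_{i-1})`. (Variables are 0-indexed by `Fin i`.) -/
theorem stmt5 (i p : ℕ) (hi : 1 ≤ i) (hip : i ≤ p) :
    Ideal.span (Set.range fun j : Fin i =>
      if (j : ℕ) + 1 < i then hh ℤ i 2 (fv i ((j : ℕ) + 1))
      else hh ℤ i (p - i + 1) (fv i i)) =
    Ideal.span (Set.range fun j : Fin i =>
      if (j : ℕ) + 1 < i then X j * hh ℤ i 1 (fv i ((j : ℕ) + 1))
      else X j ^ (p - i + 1) + X j ^ (p - i) * ∑ a ∈ fv i (i - 1), X a) := by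
  set I1 := Ideal.span (Set.range fun j : Fin i =>
      if (j : ℕ) + 1 < i then hh ℤ i 2 (fv i ((j : ℕ) + 1))
      else hh ℤ i (p - i + 1) (fv i i)) with hI1def
  set I2 := Ideal.span (Set.range fun j : Fin i =>
      if (j : ℕ) + 1 < i then X j * hh ℤ i 1 (fv i ((j : ℕ) + 1))
      else X j ^ (p - i + 1) + X j ^ (p - i) * ∑ a ∈ fv i (i - 1), X a) with hI2def
  have hgen2 : ∀ j : Fin i, (j : ℕ) + 1 < i →
      X j * hh ℤ i 1 (fv i ((j : ℕ) + 1)) ∈ I2 := by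
    intro j hj
    apply Ideal.subset_span
    exact ⟨j, by simp [hj]⟩
  have hgen1 : ∀ j : Fin i, (j : ℕ) + 1 < i →
      X j * hh ℤ i 1 (fv i ((j : ℕ) + 1)) ∈ I1 := by
    intro j hj
    have hrec := hh_fv_succ ℤ i 1 (j : ℕ) (by omega)
    have hXj : (⟨(j : ℕ), by omega⟩ : Fin i) = j := by ext; rfl
    rw [hXj] at hrec
    have h2 : X j * hh ℤ i 1 (fv i ((j : ℕ) + 1)) =
        hh ℤ i 2 (fv i ((j : ℕ) + 1)) - hh ℤ i 2 (fv i (j : ℕ)) := by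
      rw [show (2 : ℕ) = 1 + 1 from rfl, hrec]; ring
    rw [h2]
    apply sub_mem
    · apply Ideal.subset_span
      exact ⟨j, by simp [hj]⟩
    · rcases Nat.eq_zero_or_eq_succ_pred (j : ℕ) with h0 | hs
      · rw [h0, fv_zero, show (2 : ℕ) = 1 + 1 from rfl, hh_empty]
        exact zero_mem I1
      · set l := (j : ℕ) - 1 with hl
        have hjl : (j : ℕ) = l + 1 := by omega
        have hl1 : l + 1 < i := by omega
        have hcast : hh ℤ i 2 (fv i (j : ℕ)) = hh ℤ i 2 (fv i (l + 1)) := by rw [hjl]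
        rw [hcast]
        apply Ideal.subset_span
        exact ⟨⟨l, by omega⟩, by simp [hl1]⟩
  apply le_antisymm
  · rw [hI1def, Ideal.span_le]
    rintro _ ⟨j, rfl⟩
    by_cases hj : (j : ℕ) + 1 < i
    · simp only [if_pos hj]
      exact P1 i I2 hgen2 ((j : ℕ) + 1) hj 0
    · simp only [if_neg hj]
      have hjv : (⟨i - 1, by omega⟩ : Fin i) = j := by
        have := j.isLt; ext; simp; omega
      have hD := P2 i hi I2 hgen2 (p - i)
      rw [hjv] at hD
      have hg : X j ^ (p - i + 1) + X j ^ (p - i) * ∑ a ∈ fv i (i - 1), X a ∈ I2 :=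
        Ideal.subset_span ⟨j, by simp only [if_neg hj]⟩
      have heq : hh ℤ i (p - i + 1) (fv i i) =
          (hh ℤ i (p - i + 1) (fv i i) -
            (X j ^ (p - i + 1) + X j ^ (p - i) * ∑ a ∈ fv i (i - 1), X a)) +
          (X j ^ (p - i + 1) + X j ^ (p - i) * ∑ a ∈ fv i (i - 1), X a) := by ring
      rw [heq]
      exact add_mem hD hg
  · rw [hI2def, Ideal.span_le]
    rintro _ ⟨j, rfl⟩
    by_cases hj : (j : ℕ) + 1 < i
    · simp only [if_pos hj]
      exact hgen1 j hj
    · simp only [if_neg hj]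
      have hjv : (⟨i - 1, by omega⟩ : Fin i) = j := by
        have := j.isLt; ext; simp; omega
      have hD := P2 i hi I1 hgen1 (p - i)
      rw [hjv] at hD
      have hmem : hh ℤ i (p - i + 1) (fv i i) ∈ I1 :=
        Ideal.subset_span ⟨j, by simp only [if_neg hj]⟩
      have heq : X j ^ (p - i + 1) + X j ^ (p - i) * ∑ a ∈ fv i (i - 1), X a =
          hh ℤ i (p - i + 1) (fv i i) - (hh ℤ i (p - i + 1) (fv i i) -
            (X j ^ (p - i + 1) + X j ^ (p - i) * ∑ a ∈ fv i (i - 1), X a)) := by ring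
      rw [heq]
      exact sub_mem hmem hD
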